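/- arXiv:2602.12070 — 3 statements merged into one kernel-verified Lean document; each statement's English description precedes it below -/
import Mathlib

section
/- Elias's ω-code is prefix-free: for distinct positive integers M ≠ N, the codeword Code(M) is not a prefix of Code(N). -/
/-- Big-endian binary representation of a positive integer (length `1 + ⌊log₂ N⌋`). -/
def bin (N : ℕ) : List Bool := (Nat.bits N).reverse

/-- The body of Elias's ω-code: `pre N = Bin(N_{k-1}) ⋯ Bin(N_2) Bin(N_1)`,
where `N_1 = N` and `N_{i+1} = ⌊log₂ N_i⌋`, terminating at `N_k = 1`. -/
def pre : ℕ → List Bool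
  | 0 => []
  | 1 => []
  | n + 2 => pre (Nat.log 2 (n + 2)) ++ bin (n + 2)
  decreasing_by
    exact Nat.log_lt_self 2 (by omega)

/-- Elias's ω-code. -/
def code (N : ℕ) : List Bool := pre N ++ [false]

/-- Value of a big-endian bit string. -/
def ofBits (l : List Bool) : ℕ := l.foldl (fun n b => 2 * n + b.toNat) 0

lemma bits_eq (n : ℕ) (h : n ≠ 0) :
    n.bits = (decide (n % 2 = 1)) :: (n / 2).bits := by
  rcases Nat.even_or_odd n with he | ho
  · obtain ⟨k, hk⟩ := he
    have hk' : n = 2 * k := by omega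
    have hk0 : k ≠ 0 := by omega
    subst hk'
    rw [Nat.bit0_bits _ hk0]
    simp [Nat.mul_div_cancel_left, Nat.mul_mod_right]
  · obtain ⟨k, hk⟩ := ho
    subst hk
    rw [Nat.bit1_bits]
    have : (2 * k + 1) / 2 = k := by omega
    have h2 : (2 * k + 1) % 2 = 1 := by omega
    simp [this, h2]

lemma bin_eq (n : ℕ) (h : n ≠ 0) :
    bin n = bin (n / 2) ++ [decide (n % 2 = 1)] := by
  rw [bin, bits_eq n h, List.reverse_cons]; rfl

lemma ofBits_append (l : List Bool) (b : Bool) :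
    ofBits (l ++ [b]) = 2 * ofBits l + b.toNat := by
  simp [ofBits, List.foldl_append]

lemma ofBits_bin : ∀ n : ℕ, ofBits (bin n) = n := by
  intro n
  induction n using Nat.strong_induction_on with
  | _ n ih =>
    rcases Nat.eq_zero_or_pos n with h | h
    · subst h; simp [bin, ofBits, Nat.zero_bits]
    · rw [bin_eq n (by omega), ofBits_append, ih (n / 2) (by omega)]
      rcases Nat.even_or_odd n with he | ho
      · obtain ⟨k, hk⟩ := he
        have : ¬ (n % 2 = 1) := by omega
        simp [this]; omega
      · obtain ⟨k, hk⟩ := ho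
        have : n % 2 = 1 := by omega
        simp [this]; omega

lemma bin_length (n : ℕ) (h : n ≠ 0) : (bin n).length = Nat.log 2 n + 1 := by
  have h1 : (bin n).length = n.size := by
    rw [bin, List.length_reverse, Nat.size_eq_bits_len]
  rw [h1]
  have hle : n.size ≤ Nat.log 2 n + 1 :=
    Nat.size_le.mpr (Nat.lt_pow_succ_log_self (by norm_num) n)
  have hge : ¬ n.size ≤ Nat.log 2 n := by
    rw [Nat.size_le]
    exact not_lt.mpr (Nat.pow_log_le_self 2 h)
  omega

lemma bin_head (n : ℕ) (h : n ≠ 0) : ∃ l, bin n = true :: l := by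
  induction n using Nat.strong_induction_on with
  | _ n ih =>
    rcases eq_or_ne n 1 with h1 | h1
    · subst h1; exact ⟨[], by simp [bin, Nat.one_bits]⟩
    · have h2 : n / 2 ≠ 0 := by omega
      obtain ⟨l, hl⟩ := ih (n / 2) (by omega) h2
      exact ⟨l ++ [decide (n % 2 = 1)], by rw [bin_eq n h, hl]; rfl⟩

/-- Decoder for Elias's ω-code. -/
def dec (cur : ℕ) : List Bool → Option (ℕ × List Bool)
  | [] => none
  | false :: rest => some (cur, rest)
  | true :: rest => dec (ofBits (true :: rest.take cur)) (rest.drop cur)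
  termination_by l => l.length
  decreasing_by simp [Nat.lt_succ_iff]

lemma dec_pre : ∀ N : ℕ, 1 ≤ N → ∀ rest, dec 1 (pre N ++ rest) = dec N rest := by
  intro N
  induction N using Nat.strong_induction_on with
  | _ N ih =>
    intro hN rest
    rcases eq_or_ne N 1 with h1 | h1
    · subst h1; rw [show pre 1 = [] from by rw [pre], List.nil_append]
    · have hN2 : 2 ≤ N := by omega
      obtain ⟨n, rfl⟩ : ∃ n, N = n + 2 := ⟨N - 2, by omega⟩
      set L := Nat.log 2 (n + 2) with hL
      have hL1 : 1 ≤ L := Nat.log_pos (by norm_num) (by omega)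
      have hLlt : L < n + 2 := Nat.log_lt_self 2 (by omega)
      rw [show pre (n + 2) = pre L ++ bin (n + 2) by rw [pre]]
      rw [List.append_assoc, ih L hLlt hL1]
      obtain ⟨l, hl⟩ := bin_head (n + 2) (by omega)
      have hlen : l.length = L := by
        have := bin_length (n + 2) (by omega)
        rw [hl] at this; simpa using this
      rw [hl, List.cons_append, dec]
      rw [List.take_append_of_le_length (by omega), List.drop_append_of_le_length (by omega)]
      rw [List.take_of_length_le (by omega), List.drop_of_length_le (by omega)]
      rw [List.nil_append, ← hl, ofBits_bin]

lemma dec_code (N : ℕ) (h : 1 ≤ N) (rest : List Bool) :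
    dec 1 (code N ++ rest) = some (N, rest) := by
  rw [code, List.append_assoc, dec_pre N h]
  rw [List.singleton_append, dec]

/-- Elias's ω-code is prefix-free. -/
theorem stmt11 : ∀ M N : ℕ, 0 < M → 0 < N → M ≠ N → ¬ code M <+: code N := by
  intro M N hM hN hMN hpre
  obtain ⟨t, ht⟩ := hpre
  have h1 : dec 1 (code N ++ []) = some (N, []) := dec_code N hN []
  rw [List.append_nil, ← ht, dec_code M hM t] at h1
  exact hMN (by injection h1 with h; injection h)
end

section
/- Let a(t) be the integer whose Elias ω-codeword is the unique prefix of the infinite string Bin(t)^R 000... lying in the code book. Then for every positive integer k, the integer k appears in the sequence (a(t)) periodically with period 2^{|Code(k)|}; consequently, every interval I ⊆ ℕ of width 2^{|Code(k)|} satisfies {1,...,k} ⊆ {a(t) : t ∈ I}, using that |Code(k')| ≤ |Code(k)| for 1 ≤ k' ≤ k. -/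
/-- `l` is a prefix of the infinite bit-string `Bin(t)^R 000⋯`, i.e. of the bits of `t`
read from the least significant bit, padded with `0`s. -/
def IsPrefixOfStream (l : List Bool) (t : ℕ) : Prop :=
  ∀ i (h : i < l.length), l.get ⟨i, h⟩ = Nat.testBit t i

/-!
Decoding the ω-code is a deterministic iteration on states `(N, p)` (current value, read
position), started at `(1, 0)`: stop if bit `p` of the stream is `0`, otherwise replace `N` by
the `N + 1` bits starting at `p`, read as a binary numeral, and move `p` past them. Since
`code x = pre (log₂ x) ++ bin x ++ [0]` and `bin x` starts with a `1`, any `x ≠ 0` whose code is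
a prefix of the stream is the value at the first stopping state, so the code is prefix-free.
Hence `a t = k` iff `code k` is a prefix of the bits of `t`, which depends only on
`t mod 2 ^ |code k|`; as `|code|` is monotone, every `k' ≤ k` occurs in each window of
`2 ^ |code k|` consecutive integers.
-/

theorem Nat.size_eq_log_two_add_one {n : ℕ} (hn : n ≠ 0) : n.size = Nat.log 2 n + 1 :=
  le_antisymm (Nat.size_le.mpr (Nat.lt_pow_succ_log_self (by norm_num) n))
    (Nat.lt_size.mpr (Nat.pow_log_le_self 2 hn))

theorem Nat.exists_mem_Ico_mod_eq (lo r : ℕ) {P : ℕ} (hP : 0 < P) :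
    ∃ t ∈ Finset.Ico lo (lo + P), t % P = r % P := by
  have h_le : lo ≤ P * lo := Nat.le_mul_of_pos_left lo hP
  refine ⟨lo + (r + P * lo - lo) % P, ?_, ?_⟩
  · simpa using Nat.mod_lt _ hP
  · rw [Nat.add_mod_mod, show lo + (r + P * lo - lo) = r + P * lo by omega,
      Nat.add_mul_mod_self_left]

namespace EliasOmega

theorem length_bin (n : ℕ) : (bin n).length = n.size := by
  simp [bin, Nat.size_eq_bits_len]

theorem getElem_bin {n i : ℕ} (h : i < (bin n).length) :
    (bin n)[i] = n.testBit (n.size - 1 - i) := by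
  have h' : n.size - 1 - i < n.bits.length := by
    rw [length_bin] at h; rw [Nat.size_eq_bits_len]; omega
  simp only [bin, List.getElem_reverse, Nat.testBit_eq_inth, List.getI_eq_getElem _ h',
    Nat.size_eq_bits_len]

theorem getElem_bin_zero {n : ℕ} (hn : n ≠ 0) (h : 0 < (bin n).length) : (bin n)[0] = true := by
  rw [getElem_bin, Nat.size_eq_log_two_add_one hn, ← Nat.log2_eq_log_two]
  exact Nat.testBit_log2 hn

theorem toNat_ofBoolListBE_bin (n : ℕ) : (BitVec.ofBoolListBE (bin n)).toNat = n := by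
  refine Nat.eq_of_testBit_eq fun i => ?_
  rw [BitVec.testBit_toNat, BitVec.getLsbD_ofBoolListBE]
  by_cases hi : i < (bin n).length
  · have hj : (bin n).length - 1 - i < (bin n).length := by omega
    rw [List.getD_eq_getElem _ _ hj, getElem_bin, decide_eq_true hi, Bool.true_and, length_bin]
    congr 1
    rw [length_bin] at hi
    omega
  · rw [length_bin, not_lt] at hi
    rw [decide_eq_false (by rwa [length_bin, not_lt]), Bool.false_and,
      Nat.testBit_eq_false_of_lt ((Nat.lt_size_self n).trans_le (Nat.pow_le_pow_right two_pos hi))]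

theorem pre_of_two_le {n : ℕ} (hn : 2 ≤ n) : pre n = pre (Nat.log 2 n) ++ bin n := by
  obtain ⟨m, rfl⟩ := Nat.exists_eq_add_of_le' hn
  rw [pre]

theorem length_pre_of_two_le {n : ℕ} (hn : 2 ≤ n) :
    (pre n).length = (pre (Nat.log 2 n)).length + (Nat.log 2 n + 1) := by
  rw [pre_of_two_le hn, List.length_append, length_bin, Nat.size_eq_log_two_add_one (by omega)]

theorem monotone_length_pre : Monotone fun n => (pre n).length := by
  intro m n hmn
  induction n using Nat.strong_induction_on generalizing m with
  | _ n ih =>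
    rcases Nat.lt_or_ge m 2 with hm | hm
    · obtain rfl | rfl : m = 0 ∨ m = 1 := by omega
      all_goals simp [pre]
    · have hlog : Nat.log 2 m ≤ Nat.log 2 n := Nat.log_mono_right hmn
      have := ih _ (Nat.log_lt_self 2 (by omega)) hlog
      simp only [length_pre_of_two_le hm, length_pre_of_two_le (hm.trans hmn)] at this ⊢
      omega

def window (t p n : ℕ) : List Bool := (List.range n).map fun i => t.testBit (p + i)

theorem window_add (t p m n : ℕ) : window t p (m + n) = window t p m ++ window t (p + m) n := by
  simp [window, List.range_add, Function.comp_def, Nat.add_assoc]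

theorem length_window (t p n : ℕ) : (window t p n).length = n := by
  simp [window]

theorem isPrefixOfStream_iff_window {l : List Bool} {t : ℕ} :
    IsPrefixOfStream l t ↔ window t 0 l.length = l := by
  simp [IsPrefixOfStream, window, List.ext_getElem_iff, eq_comm]

theorem isPrefixOfStream_append_iff {l₁ l₂ : List Bool} {t : ℕ} :
    IsPrefixOfStream (l₁ ++ l₂) t ↔
      IsPrefixOfStream l₁ t ∧ window t l₁.length l₂.length = l₂ := by
  rw [isPrefixOfStream_iff_window, isPrefixOfStream_iff_window, List.length_append, window_add,
    Nat.zero_add]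
  exact ⟨fun h => List.append_inj h (length_window ..), fun ⟨h₁, h₂⟩ => by rw [h₁, h₂]⟩

theorem getElem_window {t p n i : ℕ} (h : i < (window t p n).length) :
    (window t p n)[i] = t.testBit (p + i) := by
  simp [window]

def decodeStep (t : ℕ) (s : ℕ × ℕ) : ℕ × ℕ :=
  ((BitVec.ofBoolListBE (window t s.2 (s.1 + 1))).toNat, s.2 + (s.1 + 1))

theorem exists_iterate_decodeStep_of_pre {t x : ℕ} (hx : x ≠ 0)
    (h : IsPrefixOfStream (pre x) t) :
    ∃ n, (decodeStep t)^[n] (1, 0) = (x, (pre x).length) ∧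
      ∀ m < n, t.testBit ((decodeStep t)^[m] (1, 0)).2 = true := by
  induction x using Nat.strong_induction_on with
  | _ x ih =>
    rcases Nat.lt_or_ge x 2 with hx1 | hx2
    · obtain rfl : x = 1 := by omega
      exact ⟨0, by simp [pre], fun m hm => absurd hm (Nat.not_lt_zero m)⟩
    rw [pre_of_two_le hx2, isPrefixOfStream_append_iff, length_bin,
      Nat.size_eq_log_two_add_one hx] at h
    obtain ⟨h_pre, h_bin⟩ := h
    obtain ⟨n, hn, h_before⟩ :=
      ih _ (Nat.log_lt_self 2 hx) (Nat.log_pos one_lt_two hx2).ne' h_pre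
    refine ⟨n + 1, ?_, fun m hm => ?_⟩
    · rw [Function.iterate_succ_apply', hn, decodeStep, h_bin, toNat_ofBoolListBE_bin,
        length_pre_of_two_le hx2]
    rcases Nat.lt_succ_iff_lt_or_eq.mp hm with hm | rfl
    · exact h_before m hm
    · have h_head := List.getElem_of_eq h_bin (i := 0) (by simp [length_window])
      rw [getElem_window, Nat.add_zero, getElem_bin_zero hx] at h_head
      rwa [hn]

theorem exists_iterate_decodeStep_of_code {t x : ℕ} (hx : x ≠ 0)
    (h : IsPrefixOfStream (code x) t) :
    ∃ n, (decodeStep t)^[n] (1, 0) = (x, (pre x).length) ∧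
      t.testBit ((decodeStep t)^[n] (1, 0)).2 = false ∧
      ∀ m < n, t.testBit ((decodeStep t)^[m] (1, 0)).2 = true := by
  rw [code, isPrefixOfStream_append_iff] at h
  obtain ⟨n, hn, h_before⟩ := exists_iterate_decodeStep_of_pre hx h.1
  refine ⟨n, hn, ?_, h_before⟩
  simpa [hn, window] using h.2

theorem eq_of_isPrefixOfStream_code {t x y : ℕ} (hx : x ≠ 0) (hy : y ≠ 0)
    (hxt : IsPrefixOfStream (code x) t) (hyt : IsPrefixOfStream (code y) t) : x = y := by
  obtain ⟨n, hn, hn_stop, hn_before⟩ := exists_iterate_decodeStep_of_code hx hxt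
  obtain ⟨m, hm, hm_stop, hm_before⟩ := exists_iterate_decodeStep_of_code hy hyt
  obtain rfl : n = m := by
    by_contra hne
    rcases Nat.lt_or_gt_of_ne hne with h | h
    · simp [hm_before n h] at hn_stop
    · simp [hn_before m h] at hm_stop
  exact congrArg Prod.fst (hn.symm.trans hm)

theorem isPrefixOfStream_iff_of_mod_eq {l : List Bool} {t s : ℕ}
    (h : t % 2 ^ l.length = s % 2 ^ l.length) :
    IsPrefixOfStream l t ↔ IsPrefixOfStream l s := by
  have h_bits : ∀ i < l.length, t.testBit i = s.testBit i := fun i hi => by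
    simpa [hi] using congrArg (Nat.testBit · i) h
  exact forall₂_congr fun i hi => by rw [h_bits i hi]

theorem isPrefixOfStream_toNat_ofBoolListLE (l : List Bool) :
    IsPrefixOfStream l (BitVec.ofBoolListLE l).toNat := fun i hi => by
  simp [BitVec.testBit_toNat, List.getElem?_eq_getElem hi]

end EliasOmega

open EliasOmega

theorem stmt13 (a : ℕ → ℕ) (ha_pos : ∀ t, 0 < a t)
    (ha : ∀ t, IsPrefixOfStream (code (a t)) t) :
    ∀ k : ℕ, 0 < k →
      ((∀ t : ℕ, a t = k ↔ a (t + 2 ^ (code k).length) = k) ∧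
        (∀ lo : ℕ, ∀ k' : ℕ, 1 ≤ k' → k' ≤ k →
          ∃ t ∈ Finset.Ico lo (lo + 2 ^ (code k).length), a t = k')) := by
  have ha_iff : ∀ k, 0 < k → ∀ t, a t = k ↔ IsPrefixOfStream (code k) t := fun k hk t =>
    ⟨fun h => h ▸ ha t, eq_of_isPrefixOfStream_code (ha_pos t).ne' hk.ne' (ha t)⟩
  intro k hk
  refine ⟨fun t => ?_, fun lo k' hk' hk'k => ?_⟩
  · rw [ha_iff k hk, ha_iff k hk]
    exact isPrefixOfStream_iff_of_mod_eq (Nat.add_mod_right _ _).symm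
  obtain ⟨t, ht, ht_mod⟩ := Nat.exists_mem_Ico_mod_eq lo
    (BitVec.ofBoolListLE (code k')).toNat (Nat.two_pow_pos (code k').length)
  have h_len : (code k').length ≤ (code k).length := by
    simpa [code] using monotone_length_pre hk'k
  refine ⟨t, Finset.Ico_subset_Ico_right ?_ ht, (ha_iff k' hk' t).mpr ?_⟩
  · exact Nat.add_le_add_left (Nat.pow_le_pow_right two_pos h_len) lo
  · exact (isPrefixOfStream_iff_of_mod_eq ht_mod).mpr (isPrefixOfStream_toNat_ofBoolListLE _)
end

section
/- Suppose each successful party removed from the system contributes at most B to future contention at any fixed time, at most μ·δ parties succeed within each full earlier block of length δ, and the contribution of a party that succeeded at time t_succ to contention at time t ≥ t_succ is at most B_β(max(t − t_succ, m)) where B_β(x) = (ln x)^β/x for x ≥ m ≥ e^β. Then the total contention removed at time t by all parties that succeeded before t is at most 3Bδ + μ·(ln t)^{β+1}/(β+1). -/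
/-!
Split the successful parties into those that succeeded in the last `3δ` time steps and the
older ones. There are at most `3δ` recent ones (success times are distinct), each contributing at
most `B = B_β(m)`. The older ones are grouped into blocks of length `δ`; a party in block `j`
contributes at most `B_β(t - (j + 1)δ)`, and a block holds at most `μδ` parties. Since `B_β` is
decreasing on `[e^β, ∞)` with primitive `(ln x)^{β+1}/(β+1)`, the sum of
`δ · B_β(t - (j + 1)δ)` over the blocks is bounded by the integral `∫ (ln x)^β/x dx` up to `t`.
-/

namespace Real

open Finset

variable {β : ℝ}

theorem hasDerivAt_log_rpow_div {x : ℝ} (hx : 0 < x) (hlog : 0 < log x) :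
    HasDerivAt (fun x => log x ^ β / x) (log x ^ (β - 1) * (β - log x) / x ^ 2) x := by
  refine (((hasDerivAt_log hx.ne').rpow_const (Or.inl hlog.ne')).div (hasDerivAt_id' x)
    hx.ne').congr_deriv ?_
  rw [rpow_sub_one hlog.ne']
  field_simp

theorem antitoneOn_log_rpow_div (hβ : 0 ≤ β) :
    AntitoneOn (fun x => log x ^ β / x) (Set.Ici (exp β)) := by
  have hlog_gt {x : ℝ} (hx : x ∈ interior (Set.Ici (exp β))) : β < log x := by
    rw [interior_Ici] at hx
    exact (lt_log_iff_exp_lt (exp_pos β |>.trans hx)).2 hx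
  refine antitoneOn_of_hasDerivWithinAt_nonpos (convex_Ici _) ?_
    (fun x hx => (hasDerivAt_log_rpow_div (exp_pos β |>.trans_le (interior_subset hx))
      (hβ.trans_lt (hlog_gt hx))).hasDerivWithinAt) fun x hx => ?_
  · intro x hx
    have hx0 : x ≠ 0 := (exp_pos β |>.trans_le hx).ne'
    exact (((continuousAt_log hx0).rpow_const (Or.inr hβ)).div continuousAt_id
      hx0).continuousWithinAt
  · have hlog := hlog_gt hx
    exact div_nonpos_of_nonpos_of_nonneg
      (mul_nonpos_of_nonneg_of_nonpos (rpow_nonneg (hβ.trans hlog.le) _) (by linarith))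
      (sq_nonneg x)

theorem hasDerivAt_log_rpow_add_one_div (hβ : 0 ≤ β) {x : ℝ} (hx : 0 < x) :
    HasDerivAt (fun x => log x ^ (β + 1) / (β + 1)) (log x ^ β / x) x := by
  refine (((hasDerivAt_log hx.ne').rpow_const (p := β + 1) (Or.inr (by linarith))).div_const
    (β + 1)).congr_deriv ?_
  rw [add_sub_cancel_right]
  field_simp

/-- The right-endpoint Riemann estimate for the decreasing integrand `(log x) ^ β / x`. -/
theorem sub_mul_log_rpow_div_le (hβ : 0 ≤ β) {a b : ℝ} (ha : exp β ≤ a) (hab : a ≤ b) :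
    (b - a) * (log b ^ β / b) ≤ log b ^ (β + 1) / (β + 1) - log a ^ (β + 1) / (β + 1) := by
  have hpos {x : ℝ} (hx : x ∈ Set.Icc a b) : 0 < x := exp_pos β |>.trans_le (ha.trans hx.1)
  have hderiv {x : ℝ} (hx : x ∈ Set.Icc a b) :
      HasDerivAt (fun x => log x ^ (β + 1) / (β + 1) - x * (log b ^ β / b))
        (log x ^ β / x - log b ^ β / b) x :=
    (hasDerivAt_log_rpow_add_one_div hβ (hpos hx)).sub (hasDerivAt_mul_const _)
  have hmono : MonotoneOn (fun x => log x ^ (β + 1) / (β + 1) - x * (log b ^ β / b))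
      (Set.Icc a b) :=
    monotoneOn_of_hasDerivWithinAt_nonneg (convex_Icc a b)
      (fun x hx => (hderiv hx).continuousAt.continuousWithinAt)
      (fun x hx => (hderiv (interior_subset hx)).hasDerivWithinAt)
      fun x hx => by
        have hx := interior_subset hx
        exact sub_nonneg.2 (antitoneOn_log_rpow_div hβ (ha.trans hx.1) (ha.trans hab) hx.2)
  have := hmono ⟨le_rfl, hab⟩ ⟨hab, le_rfl⟩ hab
  simp only at this
  linarith

theorem sum_range_mul_log_rpow_div_le (hβ : 0 ≤ β) {x δ : ℝ} (hδ : 0 ≤ δ) (n : ℕ)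
    (hn : exp β ≤ x - (n + 1) * δ) :
    ∑ j ∈ range n, δ * (log (x - (j + 1) * δ) ^ β / (x - (j + 1) * δ)) ≤
      log (x - δ) ^ (β + 1) / (β + 1) - log (x - (n + 1) * δ) ^ (β + 1) / (β + 1) := by
  induction n with
  | zero => simp
  | succ n ih =>
    push_cast at hn
    have hstep := sub_mul_log_rpow_div_le hβ hn (b := x - (n + 1) * δ) (by linarith)
    rw [show x - (n + 1) * δ - (x - (n + 1 + 1) * δ) = δ by ring] at hstep
    rw [sum_range_succ]
    push_cast
    linarith [ih (by linarith)]

theorem sum_range_mul_log_rpow_div_le_log_rpow (hβ : 0 ≤ β) {x δ : ℝ} (hδ : 0 ≤ δ) (n : ℕ)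
    (hn : exp β ≤ x - (n + 1) * δ) :
    ∑ j ∈ range n, δ * (log (x - (j + 1) * δ) ^ β / (x - (j + 1) * δ)) ≤
      log x ^ (β + 1) / (β + 1) := by
  have hβ1 : 0 < β + 1 := by linarith
  have hn1 : 1 ≤ x - (n + 1) * δ := (one_le_exp hβ).trans hn
  have hx1 : 1 ≤ x - δ := hn1.trans (by nlinarith [n.cast_nonneg (α := ℝ)])
  have hlast : 0 ≤ log (x - (n + 1) * δ) ^ (β + 1) / (β + 1) :=
    div_nonneg (rpow_nonneg (log_nonneg hn1) _) hβ1.le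
  have hmono : log (x - δ) ^ (β + 1) / (β + 1) ≤ log x ^ (β + 1) / (β + 1) := by
    gcongr
    · exact log_nonneg hx1
    · linarith
  linarith [sum_range_mul_log_rpow_div_le hβ hδ n hn]

end Real

namespace Finset

variable {ι : Type*}

theorem sum_le_sum_mul_of_card_fiber_le {κ R : Type*} [DecidableEq κ] [Semiring R]
    [PartialOrder R] [IsOrderedRing R] {P : Finset ι} {s : Finset κ} {key : ι → κ}
    {w : ι → R} {h : κ → R} {c : R} (hkey : ∀ u ∈ P, key u ∈ s)
    (hcard : ∀ j ∈ s, (#{u ∈ P | key u = j} : R) ≤ c) (hw : ∀ u ∈ P, w u ≤ h (key u))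
    (hh : ∀ j ∈ s, 0 ≤ h j) :
    ∑ u ∈ P, w u ≤ ∑ j ∈ s, c * h j := by
  rw [← sum_fiberwise_of_maps_to hkey]
  refine sum_le_sum fun j hj => ?_
  calc ∑ u ∈ P with key u = j, w u ≤ ∑ u ∈ P with key u = j, h j :=
        sum_le_sum fun u hu => (mem_filter.1 hu).2 ▸ hw u (mem_filter.1 hu).1
    _ = #{u ∈ P | key u = j} * h j := by rw [sum_const, nsmul_eq_mul]
    _ ≤ c * h j := mul_le_mul_of_nonneg_right (hcard j hj) (hh j hj)

theorem card_filter_le_add_le_of_injOn {P : Finset ι} {τ : ι → ℕ} {t : ℕ}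
    (hτ : ∀ u ∈ P, τ u < t) (hinj : Set.InjOn τ P) (k : ℕ) :
    #{u ∈ P | t ≤ τ u + k} ≤ k :=
  calc #{u ∈ P | t ≤ τ u + k} ≤ #(Ico (t - k) t) :=
        card_le_card_of_injOn τ
          (fun u hu => by
            obtain ⟨huP, hu⟩ := mem_filter.1 hu
            have := hτ u huP
            simp only [coe_Ico, Set.mem_Ico]
            omega)
          (hinj.mono (filter_subset _ P))
    _ ≤ k := by rw [Nat.card_Ico]; omega

end Finset

open Real Finset

theorem sum_filter_not_le_add_three_mul_le {ι : Type*} {β μ : ℝ} (hβ : 0 ≤ β) (hμ : 0 ≤ μ)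
    {δ t : ℕ} (hδ : exp β ≤ (δ : ℝ)) (hδ1 : 1 ≤ δ) {P : Finset ι} {τ : ι → ℕ} {w : ι → ℝ}
    (hdens : ∀ i : ℕ, (#{u ∈ P | i * δ ≤ τ u ∧ τ u < (i + 1) * δ} : ℝ) ≤ μ * δ)
    (hw : ∀ u ∈ P, ∀ y, exp β ≤ y → y ≤ t - τ u → w u ≤ log y ^ β / y) :
    ∑ u ∈ P with ¬t ≤ τ u + 3 * δ, w u ≤ μ * log t ^ (β + 1) / (β + 1) := by
  rcases (P.filter fun u => ¬t ≤ τ u + 3 * δ).eq_empty_or_nonempty with hQ | ⟨u₀, hu₀⟩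
  · rw [hQ, sum_empty]
    have := log_natCast_nonneg t
    have : 0 < β + 1 := by linarith
    positivity
  have hδ0 : 0 < δ := hδ1
  have hblock (u : ι) : τ u / δ * δ ≤ τ u ∧ τ u < (τ u / δ + 1) * δ :=
    ⟨Nat.div_mul_le_self _ _, by rw [add_one_mul]; exact Nat.lt_div_mul_add hδ0⟩
  have hold {u : ι} (hu : ¬t ≤ τ u + 3 * δ) : τ u / δ + 3 ≤ t / δ := by
    rw [← Nat.add_mul_div_right _ _ hδ0]
    exact Nat.div_le_div_right (by omega)
  set n := t / δ - 2
  have hn : exp β ≤ t - (n + 1) * δ := by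
    have h3 : 3 ≤ t / δ := le_of_add_le_right (hold (mem_filter.1 hu₀).2)
    have hn2 : ((n + 2 : ℕ) : ℝ) * δ ≤ t := by
      exact_mod_cast (show n + 2 = t / δ by omega) ▸ Nat.div_mul_le_self t δ
    push_cast at hn2
    linarith
  calc ∑ u ∈ P with ¬t ≤ τ u + 3 * δ, w u
      ≤ ∑ j ∈ range n, μ * δ * (log (t - (j + 1) * δ) ^ β / (t - (j + 1) * δ)) := by
        refine sum_le_sum_mul_of_card_fiber_le (key := (τ · / δ)) ?_ ?_ ?_ ?_
        · intro u hu
          have := hold (mem_filter.1 hu).2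
          rw [mem_range]
          omega
        · intro j _
          refine le_trans ?_ (hdens j)
          refine Nat.mono_cast (card_le_card fun u hu => ?_)
          simp only [mem_filter] at hu ⊢
          exact ⟨hu.1.1, hu.2 ▸ hblock u⟩
        · intro u hu
          obtain ⟨huP, hu⟩ := mem_filter.1 hu
          have hjt : ((τ u / δ + 3 : ℕ) : ℝ) * δ ≤ t := by
            exact_mod_cast (Nat.mul_le_mul_right δ (hold hu)).trans (Nat.div_mul_le_self t δ)
          have hτu : (τ u : ℝ) < ((τ u / δ + 1 : ℕ) : ℝ) * δ := by
            exact_mod_cast (hblock u).2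
          push_cast at hjt hτu
          exact hw u huP _ (by nlinarith) (by linarith)
        · intro j hj
          have : (j : ℝ) + 1 ≤ n := by exact_mod_cast mem_range.1 hj
          have : exp β ≤ t - (j + 1) * δ := hn.trans (by nlinarith)
          exact div_nonneg (rpow_nonneg (log_nonneg ((one_le_exp hβ).trans this)) _)
            (by linarith [exp_pos β])
    _ = μ * ∑ j ∈ range n, δ * (log (t - (j + 1) * δ) ^ β / (t - (j + 1) * δ)) := by
        simp only [mul_sum, mul_assoc]
    _ ≤ μ * (log t ^ (β + 1) / (β + 1)) := by
        gcongr
        exact sum_range_mul_log_rpow_div_le_log_rpow hβ δ.cast_nonneg n hn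
    _ = μ * log t ^ (β + 1) / (β + 1) := (mul_div_assoc _ _ _).symm

theorem stmt16_general (β μ m : ℝ) (δ t : ℕ) (P : Finset ℕ) (tsucc : ℕ → ℕ) (contrib : ℕ → ℝ)
    (hβ : 0 ≤ β) (hμ : 0 ≤ μ)
    (hm : Real.exp β ≤ m) (hδ : Real.exp β ≤ (δ : ℝ)) (hδ1 : 1 ≤ δ)
    (hst : ∀ u ∈ P, tsucc u < t)
    (hinj : Set.InjOn tsucc P)
    (hdens : ∀ i : ℕ,
      ((P.filter (fun u => i * δ ≤ tsucc u ∧ tsucc u < (i + 1) * δ)).card : ℝ) ≤ μ * δ)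
    (hc : ∀ u ∈ P, contrib u ≤
      Real.log (max ((t : ℝ) - (tsucc u : ℝ)) m) ^ β / max ((t : ℝ) - (tsucc u : ℝ)) m) :
    (∑ u ∈ P, contrib u)
      ≤ 3 * (Real.log m ^ β / m) * δ + μ * Real.log t ^ (β + 1) / (β + 1) := by
  have hcontrib : ∀ u ∈ P, ∀ y, exp β ≤ y → y ≤ max ((t : ℝ) - tsucc u) m →
      contrib u ≤ log y ^ β / y := fun u hu y hy hyle =>
    (hc u hu).trans (antitoneOn_log_rpow_div hβ hy (hy.trans hyle) hyle)
  have hB : 0 ≤ log m ^ β / m :=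
    div_nonneg (rpow_nonneg (log_nonneg ((one_le_exp hβ).trans hm)) _) (exp_pos β |>.trans_le hm).le
  rw [← sum_filter_add_sum_filter_not P (fun u => t ≤ tsucc u + 3 * δ)]
  refine add_le_add ?_ (sum_filter_not_le_add_three_mul_le hβ hμ hδ hδ1 hdens
    fun u hu y hy hyle => hcontrib u hu y hy (le_max_of_le_left hyle))
  calc ∑ u ∈ P with t ≤ tsucc u + 3 * δ, contrib u
      ≤ #{u ∈ P | t ≤ tsucc u + 3 * δ} • (log m ^ β / m) :=
        sum_le_card_nsmul _ _ _ fun u hu => hcontrib u (mem_filter.1 hu).1 m hm (le_max_right _ _)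
    _ ≤ (3 * δ) • (log m ^ β / m) :=
        nsmul_le_nsmul_left hB (card_filter_le_add_le_of_injOn hst hinj _)
    _ = 3 * (log m ^ β / m) * δ := by rw [nsmul_eq_mul]; push_cast; ring

theorem stmt16 (β μ m : ℝ) (δ t : ℕ) (P : Finset ℕ) (tsucc : ℕ → ℕ) (contrib : ℕ → ℝ)
    (hβ : 0 ≤ β) (hμ : 0 ≤ μ)
    (hm : Real.exp β ≤ m) (hδ : Real.exp β ≤ (δ : ℝ)) (hδ1 : 1 ≤ δ)
    (hst : ∀ u ∈ P, tsucc u < t)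
    (hinj : Set.InjOn tsucc P)
    (hdens : ∀ i : ℕ,
      ((P.filter (fun u => i * δ ≤ tsucc u ∧ tsucc u < (i + 1) * δ)).card : ℝ) ≤ μ * δ)
    (hc0 : ∀ u ∈ P, 0 ≤ contrib u)
    (hc : ∀ u ∈ P, contrib u ≤
      Real.log (max ((t : ℝ) - (tsucc u : ℝ)) m) ^ β / max ((t : ℝ) - (tsucc u : ℝ)) m) :
    (∑ u ∈ P, contrib u)
      ≤ 3 * (Real.log m ^ β / m) * δ + μ * Real.log t ^ (β + 1) / (β + 1) :=
  stmt16_general β μ m δ t P tsucc contrib hβ hμ hm hδ hδ1 hst hinj hdens hc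
end
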